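/- Let X be a finite set with |X| = 3n and let F = {F_1, …, F_m} with m ≥ n be a family of 3-element subsets of X. Construct the weighted graph G'(X, F) as follows: for each a ∈ X an element vertex v(a) of weight 1; for each F_j a set vertex v(F_j) of weight 1; for each F_j and each a ∈ F_j an edge (v(F_j), v(a)) of weight m − n; and a start vertex v_s of weight 0 with an edge (v_s, v(F_j)) of weight 0 for every j. Then there exists a closed covering walk from v_s in G'(X, F) (a covering walk that returns to v_s at the end) with agent count exactly N = 3n + m if and only if F contains an exact 3-cover of X, i.e., a subfamily F_c ⊆ F with |F_c| = n whose members are pairwise disjoint and whose union is X. -/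

import Mathlib

/-! Strategic deployment: common definitions.

A walk is scanned with a state consisting of the set of already-visited
vertices, the number `curr` of currently available (non-settled) agents, and
the number `add` of additional agents (beyond `N = ∑ v, wV v`) recruited so
far.  Crossing an edge `e` requires `curr ≥ wE e` (topping up `add`
otherwise); the first visit of a vertex `v` settles `wV v` agents there. -/

namespace Deploy

structure St (V : Type*) (α : Type*) where
  visited : Finset V
  curr : α
  add : α

variable {V : Type*} [DecidableEq V] {α : Type*} [AddCommMonoid α] [LinearOrder α] [IsOrderedAddMonoid α] [Sub α]

/-- Scan step for crossing an edge `e`. -/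
def crossEdge (wE : Sym2 V → α) (e : Sym2 V) (s : St V α) : St V α :=
  if s.curr < wE e then ⟨s.visited, wE e, s.add + (wE e - s.curr)⟩ else s

/-- Scan step for visiting a vertex `v` (only first visits have an effect). -/
def visitVtx (wV : V → α) (v : V) (s : St V α) : St V α :=
  if v ∈ s.visited then s
  else if s.curr < wV v then ⟨insert v s.visited, 0, s.add + (wV v - s.curr)⟩
  else ⟨insert v s.visited, s.curr - wV v, s.add⟩

variable {G : SimpleGraph V}

/-- Scanning a walk: alternately cross the next edge and visit the next vertex. -/
def scanWalk (wE : Sym2 V → α) (wV : V → α) : {u t : V} → G.Walk u t → St V α → St V α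
  | _, _, .nil, s => s
  | u, _, .cons (v := v) _ p, s => scanWalk wE wV p (visitVtx wV v (crossEdge wE s(u, v) s))

/-- The agent count of a walk `p` starting at `vs`: the scan starts with
`curr = N = ∑ v, wV v` and `add = 0`, first visiting the start vertex; the
agent count is `N` plus the final value of `add`. -/
def agentCount [Fintype V] (wE : Sym2 V → α) (wV : V → α) {vs t : V} (p : G.Walk vs t) : α :=
  (∑ v, wV v) + (scanWalk wE wV p (visitVtx wV vs ⟨∅, ∑ v, wV v, 0⟩)).add

/-- A walk is covering if every vertex of the graph appears on it. -/
def IsCovering {vs t : V} (p : G.Walk vs t) : Prop := ∀ v : V, v ∈ p.support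

end Deploy

namespace Deploy

/-- Vertices of the graph `G'(X, F)` from the 3-Exact-Cover reduction (return
variant): an element vertex for each element of `X`, a set vertex for each of
the `m` three-element subsets, and a start vertex `v_s` (no dummy vertex). -/
inductive XCVtx' (A : Type*) (m : ℕ) where
  | elem : A → XCVtx' A m
  | setv : Fin m → XCVtx' A m
  | start : XCVtx' A m
deriving DecidableEq

instance (A : Type*) [Fintype A] (m : ℕ) : Fintype (XCVtx' A m) := by
  classical
  have e : XCVtx' A m ≃ (A ⊕ Fin m) ⊕ (Fin 1) :=
    { toFun := fun v => match v with
        | .elem a => Sum.inl (Sum.inl a)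
        | .setv j => Sum.inl (Sum.inr j)
        | .start => Sum.inr 0
      invFun := fun v => match v with
        | Sum.inl (Sum.inl a) => .elem a
        | Sum.inl (Sum.inr j) => .setv j
        | Sum.inr _ => .start
      left_inv := by rintro (a | j | _) <;> rfl
      right_inv := by rintro ((a | j) | ⟨(_ | k), hk⟩) <;> first | rfl | omega }
  exact Fintype.ofEquiv _ e.symm

/-- The graph `G'(X, F)`: the start vertex is joined to every set vertex, and
each set vertex `v(F_j)` is joined to the element vertices of the three
elements of `F_j`. -/
def xcGraph' {A : Type*} {m : ℕ} (F : Fin m → Finset A) : SimpleGraph (XCVtx' A m) :=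
  SimpleGraph.fromRel (fun u v =>
    match u, v with
    | .start, .setv _ => True
    | .setv j, .elem a => a ∈ F j
    | _, _ => False)

/-- Edge weights of `G'(X, F)`: edges between set vertices and element
vertices have weight `m - n`; all edges incident to the start vertex have
weight `0`. -/
def xcWE' (A : Type*) (n m : ℕ) : Sym2 (XCVtx' A m) → ℕ :=
  Sym2.lift ⟨fun u v =>
    match u, v with
    | .setv _, .elem _ => m - n
    | .elem _, .setv _ => m - n
    | _, _ => 0,
    by rintro (a | j | _) (b | k | _) <;> rfl⟩

/-- Vertex weights of `G'(X, F)`: the start vertex has weight `0`, every other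
vertex has weight `1`. -/
def xcWV' (A : Type*) (m : ℕ) : XCVtx' A m → ℕ
  | .start => 0
  | _ => 1

end Deploy

/-! An agent count of exactly `N` means that no agent is ever recruited, so the agents in
hand always number `N` minus the weight of the vertices visited so far. At the last time the
walk leaves an element vertex, every element vertex has been visited, each one right after a
set vertex containing it, and an edge of weight `m - n` is still to be crossed; so at most
`4n` vertices have been settled, i.e. at most `n` triples cover the `3n` points, and such a
cover is exact. Conversely, touring the `n` triples of an exact cover one after another settles
`4n` agents while keeping `m - n` in hand, after which the remaining set vertices are reached
along the free edges at `v_s`. -/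

namespace SimpleGraph.Walk

variable {V : Type*} {G : SimpleGraph V}

def detour {u v : V} (h : G.Adj u v) (p : G.Walk v v) : G.Walk u u :=
  cons h (p.concat h.symm)

def bouquet {ι : Type*} {u : V} (l : List ι) (f : ι → G.Walk u u) : G.Walk u u :=
  l.foldr (fun i w => (f i).append w) nil

lemma mem_support_detour {u v w : V} (h : G.Adj u v) (p : G.Walk v v) :
    w ∈ (detour h p).support ↔ w = u ∨ w ∈ p.support := by
  simp only [detour, support_cons, support_concat, List.mem_cons, List.mem_append]
  tauto

lemma mem_edges_detour {u v : V} {e : Sym2 V} (h : G.Adj u v) (p : G.Walk v v) :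
    e ∈ (detour h p).edges ↔ e = s(u, v) ∨ e ∈ p.edges := by
  simp only [detour, edges_cons, edges_concat, List.concat_eq_append, List.mem_cons,
    List.mem_append, Sym2.eq_swap (a := v)]
  tauto

lemma mem_support_bouquet {ι : Type*} {u w : V} (l : List ι) (f : ι → G.Walk u u) :
    w ∈ (bouquet l f).support ↔ w = u ∨ ∃ i ∈ l, w ∈ (f i).support := by
  induction l with
  | nil => simp [bouquet]
  | cons i l ih =>
    simp only [bouquet, List.foldr_cons] at ih ⊢
    rw [mem_support_append_iff, ih]
    simp only [List.mem_cons, exists_eq_or_imp]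
    have := (f i).start_mem_support
    grind

lemma mem_edges_bouquet {ι : Type*} {u : V} {e : Sym2 V} (l : List ι) (f : ι → G.Walk u u) :
    e ∈ (bouquet l f).edges ↔ ∃ i ∈ l, e ∈ (f i).edges := by
  induction l with
  | nil => simp [bouquet]
  | cons i l ih =>
    simp only [bouquet, List.foldr_cons] at ih ⊢
    rw [edges_append, List.mem_append, ih]
    simp

lemma exists_mem_support_adj_of_ne {u v : V} (p : G.Walk u v) {w : V} (hw : w ∈ p.support)
    (hwu : w ≠ u) : ∃ x ∈ p.support, G.Adj x w := by
  induction p with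
  | nil => exact absurd (by simpa using hw) hwu
  | @cons u v' _ h p ih =>
    have hw : w ∈ p.support := (List.mem_cons.1 hw).resolve_left hwu
    by_cases hwv : w = v'
    · exact ⟨u, List.mem_cons_self, hwv ▸ h⟩
    · obtain ⟨x, hx, hxw⟩ := ih hw hwv
      exact ⟨x, List.mem_cons_of_mem _ hx, hxw⟩

lemma exists_last_exit {P : V → Prop} {u t : V} (p : G.Walk u t) (ht : ¬ P t)
    (hp : ∃ v ∈ p.support, P v) :
    ∃ (x y : V) (q : G.Walk u x) (h : G.Adj x y) (r : G.Walk y t),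
      p = q.append (cons h r) ∧ P x ∧ ∀ v ∈ p.support, P v → v ∈ q.support := by
  induction p with
  | nil =>
    obtain ⟨v, hv, hPv⟩ := hp
    rw [support_nil, List.mem_singleton] at hv
    exact absurd (hv ▸ hPv) ht
  | @cons u v _ h p ih =>
    by_cases hp' : ∃ w ∈ p.support, P w
    · obtain ⟨x, y, q, h', r, rfl, hx, hq⟩ := ih ht hp'
      refine ⟨x, y, cons h q, h', r, rfl, hx, fun w hw hPw => ?_⟩
      rw [support_cons, List.mem_cons] at hw ⊢
      exact hw.imp_right (hq w · hPw)
    · push Not at hp'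
      obtain ⟨w, hw, hPw⟩ := hp
      have hwu : w = u := (List.mem_cons.1 hw).resolve_right (fun hw' => hp' w hw' hPw)
      refine ⟨u, v, nil, h, p, rfl, hwu ▸ hPw, fun w' hw' hPw' => ?_⟩
      have : w' = u := (List.mem_cons.1 hw').resolve_right (fun hw'' => hp' w' hw'' hPw')
      simp [this]

end SimpleGraph.Walk

open Finset in
lemma card_eq_and_pairwiseDisjoint_of_cover {ι α : Type*} [Fintype α] [DecidableEq α]
    {k n : ℕ} (hk : 0 < k) (hα : Fintype.card α = k * n) {s : Finset ι} {F : ι → Finset α}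
    (hF : ∀ i ∈ s, #(F i) = k) (hs : #s ≤ n) (hcov : ∀ a, ∃ i ∈ s, a ∈ F i) :
    #s = n ∧ (s : Set ι).PairwiseDisjoint F := by
  classical
  have hunion : s.biUnion F = univ := eq_univ_of_forall fun a => mem_biUnion.2 (hcov a)
  have hcard : #s = n := by
    have := card_biUnion_le_card_mul s F k fun i hi => (hF i hi).le
    rw [hunion, card_univ, hα] at this
    exact le_antisymm hs (Nat.le_of_mul_le_mul_left (by linarith) hk)
  refine ⟨hcard, fun i hi j hj hij => disjoint_left.2 fun x hxi hxj => ?_⟩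
  set B := (s.erase i).biUnion F
  have hx : x ∈ F i ∩ B :=
    mem_inter.2 ⟨hxi, mem_biUnion.2 ⟨j, mem_erase.2 ⟨hij.symm, hj⟩, hxj⟩⟩
  have hsplit : F i ∪ B = univ := by rw [← hunion, ← biUnion_insert, insert_erase hi]
  have hB : #B ≤ #(s.erase i) * k :=
    card_biUnion_le_card_mul _ F k fun l hl => (hF l (mem_of_mem_erase hl)).le
  have hkn : k * n = #(s.erase i) * k + k := by
    rw [← hcard, ← card_erase_add_one hi]; ring
  have := card_union_add_card_inter (F i) B
  rw [hsplit, card_univ, hα, hF i hi] at this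
  have := card_pos.2 ⟨x, hx⟩
  omega

namespace Deploy

open SimpleGraph.Walk Finset

section Scan

variable {V : Type*} {G : SimpleGraph V} {wE : Sym2 V → ℕ} {wV : V → ℕ} {s : St V ℕ}

/-- Agents in hand: those still travelling plus those already settled. -/
def St.total (wV : V → ℕ) (s : St V ℕ) : ℕ := s.curr + ∑ v ∈ s.visited, wV v

lemma crossEdge_of_le {e : Sym2 V} (h : wE e ≤ s.curr) : crossEdge wE e s = s := by
  simp [crossEdge, Nat.not_lt.2 h]

lemma crossEdge_add_eq_iff {e : Sym2 V} : (crossEdge wE e s).add = s.add ↔ wE e ≤ s.curr := by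
  unfold crossEdge; split <;> simp <;> omega

lemma add_le_add_crossEdge {e : Sym2 V} : s.add ≤ (crossEdge wE e s).add := by
  unfold crossEdge; split <;> simp

lemma visited_crossEdge {e : Sym2 V} : (crossEdge wE e s).visited = s.visited := by
  unfold crossEdge; split <;> rfl

lemma total_crossEdge_add {e : Sym2 V} :
    (crossEdge wE e s).total wV + s.add = s.total wV + (crossEdge wE e s).add := by
  unfold crossEdge St.total; split
  · simp only; omega
  · rfl

variable [DecidableEq V]

lemma visitVtx_of_mem {v : V} (h : v ∈ s.visited) : visitVtx wV v s = s := by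
  simp [visitVtx, h]

lemma visitVtx_of_le {v : V} (h : v ∉ s.visited) (hv : wV v ≤ s.curr) :
    visitVtx wV v s = ⟨insert v s.visited, s.curr - wV v, s.add⟩ := by
  simp [visitVtx, h, Nat.not_lt.2 hv]

lemma add_le_add_visitVtx {v : V} : s.add ≤ (visitVtx wV v s).add := by
  unfold visitVtx; split
  · rfl
  · split <;> simp

lemma visited_visitVtx {v : V} : (visitVtx wV v s).visited = insert v s.visited := by
  unfold visitVtx; split
  · simp [*]
  · split <;> rfl

lemma total_visitVtx_add {v : V} :
    (visitVtx wV v s).total wV + s.add = s.total wV + (visitVtx wV v s).add := by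
  unfold visitVtx St.total; split
  · rfl
  · split <;> simp [Finset.sum_insert ‹v ∉ s.visited›] <;> omega

lemma scanWalk_cons {u v t : V} (h : G.Adj u v) (p : G.Walk v t) (s : St V ℕ) :
    scanWalk wE wV (.cons h p) s = scanWalk wE wV p (visitVtx wV v (crossEdge wE s(u, v) s)) :=
  rfl

lemma scanWalk_append {u v t : V} (p : G.Walk u v) (q : G.Walk v t) (s : St V ℕ) :
    scanWalk wE wV (p.append q) s = scanWalk wE wV q (scanWalk wE wV p s) := by
  induction p generalizing s with
  | nil => rfl
  | cons h p ih => exact ih _ _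

lemma add_le_add_scanWalk {u t : V} (p : G.Walk u t) (s : St V ℕ) :
    s.add ≤ (scanWalk wE wV p s).add := by
  induction p generalizing s with
  | nil => rfl
  | cons h p ih => exact add_le_add_crossEdge.trans (add_le_add_visitVtx.trans (ih _))

lemma visited_scanWalk {u t : V} (p : G.Walk u t) (s : St V ℕ) (hu : u ∈ s.visited) :
    (scanWalk wE wV p s).visited = s.visited ∪ p.support.toFinset := by
  induction p generalizing s with
  | nil => simp [scanWalk, hu]
  | @cons u v _ h p ih =>
    have hv : v ∈ (visitVtx wV v (crossEdge wE s(u, v) s)).visited := by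
      simp [visited_visitVtx]
    have hvp : v ∈ p.support := p.start_mem_support
    rw [scanWalk_cons, ih _ hv, visited_visitVtx, visited_crossEdge]
    ext x
    simp only [Finset.mem_union, Finset.mem_insert, List.mem_toFinset, support_cons,
      List.mem_cons]
    grind

/-- Conservation of agents: the agents in hand grow exactly by the recruits. -/
lemma total_scanWalk_add {u t : V} (p : G.Walk u t) (s : St V ℕ) :
    (scanWalk wE wV p s).total wV + s.add = s.total wV + (scanWalk wE wV p s).add := by
  induction p generalizing s with
  | nil => rfl
  | @cons u v _ h p ih =>
    have h₁ := ih (visitVtx wV v (crossEdge wE s(u, v) s))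
    have h₂ := total_visitVtx_add (wV := wV) (v := v) (s := crossEdge wE s(u, v) s)
    have h₃ := total_crossEdge_add (wE := wE) (wV := wV) (e := s(u, v)) (s := s)
    rw [scanWalk_cons]
    omega

lemma add_scanWalk_eq_of_total_le {u t : V} (p : G.Walk u t) (s : St V ℕ) (S : Finset V)
    (W : ℕ) (hS : s.visited ∪ p.support.toFinset ⊆ S) (hW : ∀ e ∈ p.edges, wE e ≤ W)
    (hbudget : W + ∑ v ∈ S, wV v ≤ s.total wV) :
    (scanWalk wE wV p s).add = s.add := by
  induction p generalizing s with
  | nil => rfl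
  | @cons u v _ h p ih =>
    have hvS : insert v s.visited ⊆ S := Finset.insert_subset
      (hS (by simp)) (Finset.subset_union_left.trans hS)
    have hsettle : ∑ x ∈ insert v s.visited, wV x ≤ ∑ x ∈ S, wV x :=
      Finset.sum_le_sum_of_subset hvS
    have hcross : crossEdge wE s(u, v) s = s := by
      refine crossEdge_of_le ((hW _ (by simp)).trans ?_)
      have := Finset.sum_le_sum_of_subset (f := wV) (Finset.subset_insert v s.visited)
      unfold St.total at hbudget
      omega
    have hvisit : (visitVtx wV v s).add = s.add := by
      by_cases hv : v ∈ s.visited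
      · rw [visitVtx_of_mem hv]
      · rw [Finset.sum_insert hv] at hsettle
        unfold St.total at hbudget
        rw [visitVtx_of_le hv (by omega)]
    have hS' : (visitVtx wV v s).visited ∪ p.support.toFinset ⊆ S := by
      rw [visited_visitVtx]
      refine Finset.union_subset hvS fun x hx => hS ?_
      simp_all
    have htotal := total_visitVtx_add (wV := wV) (v := v) (s := s)
    rw [scanWalk_cons, hcross, ih _ hS' (fun e he => hW e (by simp [he])) (by omega), hvisit]

lemma le_curr_of_add_scanWalk_eq {u x y t : V} (q : G.Walk u x) (h : G.Adj x y)
    (r : G.Walk y t) (s : St V ℕ)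
    (hadd : (scanWalk wE wV (q.append (cons h r)) s).add = s.add) :
    wE s(x, y) ≤ (scanWalk wE wV q s).curr ∧ (scanWalk wE wV q s).add = s.add := by
  rw [scanWalk_append, scanWalk_cons] at hadd
  have h₁ := add_le_add_scanWalk (wE := wE) (wV := wV) q s
  have h₂ := add_le_add_crossEdge (wE := wE) (e := s(x, y)) (s := scanWalk wE wV q s)
  have h₃ := add_le_add_visitVtx (wV := wV) (v := y)
    (s := crossEdge wE s(x, y) (scanWalk wE wV q s))
  have h₄ := add_le_add_scanWalk (wE := wE) (wV := wV) r
    (visitVtx wV y (crossEdge wE s(x, y) (scanWalk wE wV q s)))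
  exact ⟨crossEdge_add_eq_iff.1 (by omega), by omega⟩

end Scan

section XC

variable {A : Type*} {n m : ℕ} {F : Fin m → Finset A}

lemma xcGraph'_adj_start_setv (j : Fin m) : (xcGraph' F).Adj .start (.setv j) := by
  simp [xcGraph']

lemma xcGraph'_adj_setv_elem {j : Fin m} {a : A} (h : a ∈ F j) :
    (xcGraph' F).Adj (.setv j) (.elem a) := by
  simp [xcGraph', h]

lemma exists_eq_setv_of_adj_elem {w : XCVtx' A m} {a : A} (h : (xcGraph' F).Adj w (.elem a)) :
    ∃ j, w = .setv j ∧ a ∈ F j := by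
  rcases w with b | j | _ <;> simp_all [xcGraph']

lemma xcWE'_le (e : Sym2 (XCVtx' A m)) : xcWE' A n m e ≤ m - n := by
  induction e using Sym2.ind with
  | h u v => rcases u with _ | _ | _ <;> rcases v with _ | _ | _ <;> simp [xcWE']

noncomputable def setGadget (j : Fin m) : (xcGraph' F).Walk .start .start :=
  detour (xcGraph'_adj_start_setv j)
    (bouquet (F j).attach.toList fun a => detour (xcGraph'_adj_setv_elem a.2) nil)

lemma mem_support_setGadget {j : Fin m} {v : XCVtx' A m} :
    v ∈ (setGadget (F := F) j).support ↔
      v = .start ∨ v = .setv j ∨ ∃ a ∈ F j, v = .elem a := by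
  simp only [setGadget, mem_support_detour, mem_support_bouquet, mem_toList, mem_attach,
    true_and, Subtype.exists, support_nil, List.mem_singleton]
  grind

def setTour : (xcGraph' F).Walk .start .start :=
  bouquet (List.finRange m) fun j => detour (xcGraph'_adj_start_setv j) nil

lemma xcWE'_of_mem_edges_setTour {e : Sym2 (XCVtx' A m)} (he : e ∈ (setTour (F := F)).edges) :
    xcWE' A n m e = 0 := by
  simp only [setTour, mem_edges_bouquet, mem_edges_detour, edges_nil, List.not_mem_nil,
    or_false] at he
  obtain ⟨j, -, rfl⟩ := he
  rfl

noncomputable def coverTour (Fc : Finset (Fin m)) : (xcGraph' F).Walk .start .start :=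
  bouquet Fc.toList setGadget

lemma isCovering_coverTour_append_setTour {Fc : Finset (Fin m)}
    (hcov : ∀ a, ∃ j ∈ Fc, a ∈ F j) :
    IsCovering ((coverTour (F := F) Fc).append setTour) := by
  intro v
  rw [mem_support_append_iff]
  rcases v with a | j | _
  · obtain ⟨j, hj, ha⟩ := hcov a
    exact Or.inl ((mem_support_bouquet _ _).2 (Or.inr ⟨j, mem_toList.2 hj,
      mem_support_setGadget.2 (Or.inr (Or.inr ⟨a, ha, rfl⟩))⟩))
  · exact Or.inr ((mem_support_bouquet _ _).2 (Or.inr ⟨j, List.mem_finRange j,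
      (mem_support_detour _ _).2 (Or.inr (by simp))⟩))
  · exact Or.inl (coverTour Fc).start_mem_support

@[simp] lemma xcWV'_start : xcWV' A m .start = 0 := rfl

lemma total_initial (N : ℕ) :
    (⟨{.start}, N, 0⟩ : St (XCVtx' A m) ℕ).total (xcWV' A m) = N := by
  simp [St.total]

variable [DecidableEq A]

lemma sum_xcWV' (T : Finset (XCVtx' A m)) : ∑ v ∈ T, xcWV' A m v = #(T.erase .start) := by
  rw [← sum_erase T (a := .start) rfl, card_eq_sum_ones]
  refine sum_congr rfl fun v hv => ?_
  rcases v with _ | _ | _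
  · rfl
  · rfl
  · simp at hv

lemma visitVtx_start_initial (N : ℕ) :
    visitVtx (xcWV' A m) .start (⟨∅, N, 0⟩ : St (XCVtx' A m) ℕ) = ⟨{.start}, N, 0⟩ := by
  simp [visitVtx]

def coverVertices [Fintype A] (Fc : Finset (Fin m)) : Finset (XCVtx' A m) :=
  univ.image .elem ∪ Fc.image .setv

variable [Fintype A]

lemma mem_coverVertices {Fc : Finset (Fin m)} {v : XCVtx' A m} :
    v ∈ coverVertices Fc ↔ (∃ a, v = .elem a) ∨ ∃ j ∈ Fc, v = .setv j := by
  simp [coverVertices, eq_comm]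

lemma card_coverVertices (Fc : Finset (Fin m)) :
    #(coverVertices (A := A) Fc) = Fintype.card A + #Fc := by
  rw [coverVertices, card_union_of_disjoint, card_image_of_injective _ fun _ _ => XCVtx'.elem.inj,
    card_image_of_injective _ fun _ _ => XCVtx'.setv.inj, card_univ]
  simp [disjoint_left]

lemma sum_univ_xcWV' : ∑ v, xcWV' A m v = Fintype.card A + m := by
  have : univ.erase .start = coverVertices (A := A) (m := m) univ := by
    ext v; rcases v with _ | _ | _ <;> simp [mem_coverVertices]
  rw [sum_xcWV', this, card_coverVertices, card_univ, Fintype.card_fin]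

lemma exists_cover_of_agentCount_eq (hA : Fintype.card A = 3 * n)
    (p : (xcGraph' F).Walk .start .start) (hp : IsCovering p)
    (hcount : agentCount (xcWE' A n m) (xcWV' A m) p = 3 * n + m) :
    ∃ Fc : Finset (Fin m), #Fc ≤ n ∧ ∀ a, ∃ j ∈ Fc, a ∈ F j := by
  rcases isEmpty_or_nonempty A with _ | ⟨⟨a₀⟩⟩
  · exact ⟨∅, by simp, isEmptyElim⟩
  rw [agentCount, sum_univ_xcWV', hA, visitVtx_start_initial] at hcount
  set s₀ : St (XCVtx' A m) ℕ := ⟨{.start}, 3 * n + m, 0⟩ with hs₀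
  have hs₀_total : s₀.total (xcWV' A m) = 3 * n + m := total_initial _
  have hadd : (scanWalk (xcWE' A n m) (xcWV' A m) p s₀).add = s₀.add := by
    change _ = 0
    omega
  -- Leaving the last element vertex crosses an edge of weight `m - n`.
  obtain ⟨_, _, q, hxy, r, rfl, ⟨a, rfl⟩, hq⟩ := p.exists_last_exit
    (P := fun v => ∃ a, v = .elem a) (by simp) ⟨_, hp (.elem a₀), a₀, rfl⟩
  obtain ⟨j, rfl, -⟩ := exists_eq_setv_of_adj_elem hxy.symm
  obtain ⟨hcurr, hqadd⟩ := le_curr_of_add_scanWalk_eq q hxy r s₀ hadd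
  have helem : ∀ b, XCVtx'.elem b ∈ q.support := fun b => hq _ (hp _) ⟨b, rfl⟩
  refine ⟨univ.filter fun j => XCVtx'.setv j ∈ q.support, ?_, fun b => ?_⟩
  · have hsub : coverVertices (univ.filter fun j => XCVtx'.setv j ∈ q.support) ⊆
        (scanWalk (xcWE' A n m) (xcWV' A m) q s₀).visited.erase .start := by
      rw [visited_scanWalk q s₀ (by simp [hs₀])]
      intro v hv
      rcases mem_coverVertices.1 hv with ⟨b, rfl⟩ | ⟨k, hk, rfl⟩ <;> simp_all
    have htotal : (scanWalk (xcWE' A n m) (xcWV' A m) q s₀).curr +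
        #((scanWalk (xcWE' A n m) (xcWV' A m) q s₀).visited.erase .start) = 3 * n + m := by
      have h := total_scanWalk_add (wE := xcWE' A n m) (wV := xcWV' A m) q s₀
      rwa [hqadd, hs₀_total, St.total, sum_xcWV', add_left_inj] at h
    have hcard := card_le_card hsub
    rw [card_coverVertices, hA] at hcard
    change m - n ≤ _ at hcurr
    omega
  · obtain ⟨w, hw, hwb⟩ := q.exists_mem_support_adj_of_ne (helem b) (by simp)
    obtain ⟨k, rfl, hbk⟩ := exists_eq_setv_of_adj_elem hwb
    exact ⟨k, by simp [hw], hbk⟩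

/-- The tour settles the `4n` vertices of the cover, never holding fewer than `m - n` agents. -/
lemma add_scanWalk_coverTour (hA : Fintype.card A = 3 * n) {Fc : Finset (Fin m)}
    (hcard : #Fc = n) :
    (scanWalk (xcWE' A n m) (xcWV' A m) (coverTour (F := F) Fc) ⟨{.start}, 3 * n + m, 0⟩).add
      = 0 := by
  have hnm : n ≤ m := hcard ▸ (card_le_univ Fc).trans_eq (Fintype.card_fin m)
  set S := insert .start (coverVertices (A := A) Fc)
  have hS : {.start} ∪ (coverTour (F := F) Fc).support.toFinset ⊆ S := by
    intro v hv
    simp only [mem_union, mem_singleton, List.mem_toFinset, coverTour, mem_support_bouquet,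
      mem_toList, mem_support_setGadget] at hv
    simp only [S, mem_insert, mem_coverVertices]
    grind
  have hS_sum : ∑ v ∈ S, xcWV' A m v = 4 * n := by
    rw [sum_xcWV', erase_insert (by simp [mem_coverVertices]), card_coverVertices, hA, hcard]
    ring
  exact add_scanWalk_eq_of_total_le _ _ S (m - n) hS (fun e _ => xcWE'_le e)
    (by rw [hS_sum, total_initial]; omega)

lemma exists_covering_agentCount_eq_of_cover (hA : Fintype.card A = 3 * n)
    {Fc : Finset (Fin m)} (hcard : #Fc = n) (hcov : ∀ a, ∃ j ∈ Fc, a ∈ F j) :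
    ∃ p : (xcGraph' F).Walk .start .start,
      IsCovering p ∧ agentCount (xcWE' A n m) (xcWV' A m) p = 3 * n + m := by
  set s₀ : St (XCVtx' A m) ℕ := ⟨{.start}, 3 * n + m, 0⟩ with hs₀
  have h₁ : (scanWalk (xcWE' A n m) (xcWV' A m) (coverTour (F := F) Fc) s₀).add = 0 :=
    add_scanWalk_coverTour hA hcard
  set s₁ := scanWalk (xcWE' A n m) (xcWV' A m) (coverTour (F := F) Fc) s₀
  have hs₁_total : s₁.total (xcWV' A m) = 3 * n + m := by
    have h := total_scanWalk_add (wE := xcWE' A n m) (wV := xcWV' A m) (coverTour (F := F) Fc) s₀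
    rwa [h₁, total_initial, hs₀, add_zero, add_zero] at h
  have h₂ : (scanWalk (xcWE' A n m) (xcWV' A m) (setTour (F := F)) s₁).add = 0 := by
    rw [add_scanWalk_eq_of_total_le _ s₁ univ 0 (subset_univ _)
      (fun e he => (xcWE'_of_mem_edges_setTour he).le)
      (by rw [zero_add, sum_univ_xcWV', hA, hs₁_total])]
    exact h₁
  refine ⟨(coverTour Fc).append setTour, isCovering_coverTour_append_setTour hcov, ?_⟩
  rw [agentCount, sum_univ_xcWV', hA, visitVtx_start_initial, scanWalk_append, ← hs₀, h₂,
    add_zero]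

end XC

end Deploy

theorem xc_reduction_return_general {A : Type*} [Fintype A] [DecidableEq A]
    (n m : ℕ) (hA : Fintype.card A = 3 * n)
    (F : Fin m → Finset A) (hF : ∀ j, (F j).card = 3) :
    (∃ p : (Deploy.xcGraph' F).Walk .start .start,
      Deploy.IsCovering p ∧
      Deploy.agentCount (Deploy.xcWE' A n m) (Deploy.xcWV' A m) p = 3 * n + m) ↔
    (∃ Fc : Finset (Fin m), Fc.card = n ∧
      (∀ i ∈ Fc, ∀ j ∈ Fc, i ≠ j → Disjoint (F i) (F j)) ∧
      ∀ a : A, ∃ j ∈ Fc, a ∈ F j) := by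
  constructor
  · rintro ⟨p, hp, hcount⟩
    obtain ⟨Fc, hle, hcov⟩ := Deploy.exists_cover_of_agentCount_eq hA p hp hcount
    obtain ⟨hcard, hdisj⟩ := card_eq_and_pairwiseDisjoint_of_cover (by norm_num) hA
      (fun j _ => hF j) hle hcov
    exact ⟨Fc, hcard, fun i hi j hj hij => hdisj hi hj hij, hcov⟩
  · rintro ⟨Fc, hcard, -, hcov⟩
    exact Deploy.exists_covering_agentCount_eq_of_cover hA hcard hcov

/-- with `|X| = 3n` and `F` a family of `m ≥ n` three-element
subsets of `X`, the graph `G'(X, F)` admits a closed covering walk from `v_s`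
(returning to `v_s` at the end) with agent count exactly `N = 3n + m` if and
only if `F` contains an exact 3-cover of `X`. -/
theorem xc_reduction_return {A : Type*} [Fintype A] [DecidableEq A]
    (n m : ℕ) (hnm : n ≤ m) (hA : Fintype.card A = 3 * n)
    (F : Fin m → Finset A) (hF : ∀ j, (F j).card = 3) :
    (∃ p : (Deploy.xcGraph' F).Walk .start .start,
      Deploy.IsCovering p ∧
      Deploy.agentCount (Deploy.xcWE' A n m) (Deploy.xcWV' A m) p = 3 * n + m) ↔
    (∃ Fc : Finset (Fin m), Fc.card = n ∧
      (∀ i ∈ Fc, ∀ j ∈ Fc, i ≠ j → Disjoint (F i) (F j)) ∧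
      ∀ a : A, ∃ j ∈ Fc, a ∈ F j) :=
  xc_reduction_return_general n m hA F hF
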